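/- arXiv:2404.16003 — 2 statements merged into one kernel-verified Lean document; each statement's English description precedes it below -/
import Mathlib

section
/- Let (y_j)_{j≥1} be a sequence of complex numbers with |y₁| ≥ |y₂| ≥ |y₃| ≥ ⋯, with y₁ ≠ 0, and such that K := Σ_{j≥1} |y_j|/|y₁| converges. Then there exists an integer k with 1 ≤ k ≤ 24K such that Re Σ_{j≥1} y_j^k ≥ (1/8)|y₁|^k. -/
/-!
Normalise so that `‖y 0‖ = 1`, put `w = y 0`, and suppose `Re ∑_j y_j^k < 1/8` for all
`1 ≤ k ≤ n`. Pair these power sums with the nonnegative weights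
`(1 - k/(n+1)) (1 + Re w^k)`, whose total is `n/2 + Φ(w)`, where
`Φ(v) = ∑_{k ≤ n} (1 - k/(n+1)) Re v^k` is the real part of a Fejér mean. The pairing is then
below `(n/2 + Φ(w))/8`. Summed over `j` first instead, it becomes
`∑_j (Φ(y_j) + (Φ(w y_j) + Φ(w̄ y_j))/2)`. Fejér's kernel is nonnegative, so `Φ ≥ -1/2` on the
unit disk, and `|Φ(v)| ≤ |v|/(1-|v|)`. Together these make the `j = 0` term at least
`Φ(w) + n/4 - 1/4` and every other term at least `-4|y_j|`. For `n = ⌊24 ∑ |y_j|⌋` the two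
bounds contradict each other.
-/

open Finset Complex ComplexConjugate

noncomputable section

namespace Turan

/-- `fejerWeight n (k - 1) = 1 - k / (n + 1)` is the Fejér weight of `v ^ k`. -/
def fejerWeight (n i : ℕ) : ℝ := (n - i : ℝ) / (n + 1)

def fejerSum (n : ℕ) (v : ℂ) : ℝ := ∑ i ∈ range n, fejerWeight n i * (v ^ (i + 1)).re

lemma fejerWeight_nonneg {n i : ℕ} (hi : i ∈ range n) : 0 ≤ fejerWeight n i := by
  have : (i : ℝ) ≤ n := by exact_mod_cast (mem_range.mp hi).le
  unfold fejerWeight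
  exact div_nonneg (by linarith) (by positivity)

lemma fejerWeight_le_one (n i : ℕ) : fejerWeight n i ≤ 1 := by
  rw [fejerWeight, div_le_one (by positivity)]
  linarith [(i.cast_nonneg : (0 : ℝ) ≤ i)]

lemma sum_fejerWeight (n : ℕ) : ∑ i ∈ range n, fejerWeight n i = n / 2 := by
  have hid : ∑ i ∈ range n, (i : ℝ) = n * (n - 1) / 2 := by
    induction n with
    | zero => simp
    | succ m ih => rw [sum_range_succ, ih]; push_cast; ring
  simp only [fejerWeight, ← sum_div, sum_sub_distrib, sum_const, card_range, nsmul_eq_mul, hid]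
  field_simp
  ring

lemma re_pow_mul_conj_pow {z : ℂ} (hz : ‖z‖ = 1) {a b : ℕ} (hba : b ≤ a) :
    (z ^ b * conj (z ^ a)).re = (z ^ (a - b)).re := by
  have hb : z ^ b * conj (z ^ b) = 1 := by
    rw [mul_conj, normSq_eq_norm_sq, norm_pow, hz]; simp
  rw [← Nat.add_sub_cancel' hba, pow_add, map_mul, ← mul_assoc, hb, one_mul, conj_re,
    Nat.add_sub_cancel_left]

lemma normSq_geom_sum {z : ℂ} (hz : ‖z‖ = 1) (m : ℕ) :
    normSq (∑ a ∈ range (m + 1), z ^ a)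
      = m + 1 + 2 * ∑ i ∈ range m, (m - i : ℝ) * (z ^ (i + 1)).re := by
  induction m with
  | zero => simp
  | succ m ih =>
    have hcross : ((∑ a ∈ range (m + 1), z ^ a) * conj (z ^ (m + 1))).re
        = ∑ i ∈ range (m + 1), (z ^ (i + 1)).re := by
      rw [sum_mul, re_sum, ← sum_range_reflect]
      refine sum_congr rfl fun b hb => ?_
      have hb := mem_range.mp hb
      rw [re_pow_mul_conj_pow hz (b := m + 1 - 1 - b) (by omega)]
      congr 2
      omega
    have hlast : ∑ i ∈ range (m + 1), ((m + 1 : ℕ) - i : ℝ) * (z ^ (i + 1)).re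
        = ∑ i ∈ range m, (m - i : ℝ) * (z ^ (i + 1)).re
          + ∑ i ∈ range (m + 1), (z ^ (i + 1)).re := by
      calc ∑ i ∈ range (m + 1), ((m + 1 : ℕ) - i : ℝ) * (z ^ (i + 1)).re
          = ∑ i ∈ range (m + 1), ((m - i : ℝ) * (z ^ (i + 1)).re + (z ^ (i + 1)).re) :=
            sum_congr rfl fun i _ => by push_cast; ring
        _ = _ := by rw [sum_add_distrib, sum_range_succ _ m, sub_self, zero_mul, add_zero]
    rw [sum_range_succ _ (m + 1), normSq_add, ih, hcross, hlast, normSq_eq_norm_sq, norm_pow, hz]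
    push_cast
    ring

lemma fejerSum_ge_neg_half_of_norm_eq_one {z : ℂ} (hz : ‖z‖ = 1) (n : ℕ) :
    -(1 / 2) ≤ fejerSum n z := by
  have hpos := normSq_geom_sum hz n ▸ normSq_nonneg (∑ a ∈ range (n + 1), z ^ a)
  have hsum : fejerSum n z = (∑ i ∈ range n, (n - i : ℝ) * (z ^ (i + 1)).re) / (n + 1) := by
    simp only [fejerSum, fejerWeight, sum_div, div_mul_eq_mul_div]
  rw [hsum, le_div_iff₀ (by positivity)]
  linarith

/-- Minimum principle for the harmonic function `fejerSum n`, via the maximum modulus principle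
for `exp (-F)`, where `F` is the polynomial with real part `fejerSum n`. -/
lemma fejerSum_ge_neg_half {v : ℂ} (hv : ‖v‖ ≤ 1) (n : ℕ) : -(1 / 2) ≤ fejerSum n v := by
  set F : ℂ → ℂ := fun z => ∑ i ∈ range n, (fejerWeight n i : ℂ) * z ^ (i + 1)
  have hre (z : ℂ) : (F z).re = fejerSum n z := by
    simp only [F, fejerSum, re_sum, re_ofReal_mul]
  have hF : Differentiable ℂ F := by fun_prop
  suffices ‖exp (-F v)‖ ≤ Real.exp (1 / 2) by
    rw [norm_exp, Real.exp_le_exp, neg_re, hre] at this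
    linarith
  refine norm_le_of_forall_mem_frontier_norm_le Metric.isBounded_ball (hF.neg.cexp).diffContOnCl
    (fun z hz => ?_) (by rwa [closure_ball _ one_ne_zero, mem_closedBall_zero_iff])
  rw [frontier_ball _ one_ne_zero, mem_sphere_zero_iff_norm] at hz
  rw [norm_exp, Real.exp_le_exp, Pi.neg_apply, neg_re, hre]
  linarith [fejerSum_ge_neg_half_of_norm_eq_one hz n]

lemma abs_fejerSum_le {v : ℂ} (hv : ‖v‖ < 1) (n : ℕ) : |fejerSum n v| ≤ ‖v‖ / (1 - ‖v‖) := by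
  have hterm (i : ℕ) (hi : i ∈ range n) :
      |fejerWeight n i * (v ^ (i + 1)).re| ≤ ‖v‖ * ‖v‖ ^ i := by
    rw [abs_mul, abs_of_nonneg (fejerWeight_nonneg hi), pow_succ', ← norm_pow, ← norm_mul,
      ← pow_succ']
    exact (mul_le_of_le_one_left (abs_nonneg _) (fejerWeight_le_one n i)).trans (abs_re_le_norm _)
  calc |fejerSum n v| ≤ ∑ i ∈ range n, ‖v‖ * ‖v‖ ^ i :=
        (abs_sum_le_sum_abs _ _).trans (sum_le_sum hterm)
    _ ≤ ‖v‖ * ∑' i, ‖v‖ ^ i := by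
        rw [← mul_sum]
        refine mul_le_mul_of_nonneg_left ?_ (norm_nonneg v)
        exact (summable_geometric_of_lt_one (norm_nonneg v) hv).sum_le_tsum _
          fun i _ => by positivity
    _ = ‖v‖ / (1 - ‖v‖) := by rw [tsum_geometric_of_lt_one (norm_nonneg v) hv, div_eq_mul_inv]

def twistedFejerSum (n : ℕ) (w v : ℂ) : ℝ :=
  ∑ i ∈ range n, fejerWeight n i * (1 + (w ^ (i + 1)).re) * (v ^ (i + 1)).re

lemma twistedFejerSum_eq (n : ℕ) (w v : ℂ) :
    twistedFejerSum n w v = fejerSum n v + (fejerSum n (w * v) + fejerSum n (conj w * v)) / 2 := by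
  simp only [twistedFejerSum, fejerSum, ← sum_add_distrib, sum_div]
  refine sum_congr rfl fun i _ => ?_
  simp only [mul_pow, ← map_pow, mul_re, conj_re, conj_im]
  ring

lemma sum_fejerWeight_mul_one_add_re (n : ℕ) (w : ℂ) :
    ∑ i ∈ range n, fejerWeight n i * (1 + (w ^ (i + 1)).re) = n / 2 + fejerSum n w := by
  simp only [mul_add, mul_one, sum_add_distrib, sum_fejerWeight, fejerSum]

/-- Below `‖v‖ = 1/4` by the geometric bound, above it by the lower bound `-1/2`. -/
lemma neg_four_mul_norm_le_twistedFejerSum {w v : ℂ} (hw : ‖w‖ = 1) (hv : ‖v‖ ≤ 1) (n : ℕ) :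
    -(4 * ‖v‖) ≤ twistedFejerSum n w v := by
  have hwv : ‖w * v‖ = ‖v‖ := by rw [norm_mul, hw, one_mul]
  have hwv' : ‖conj w * v‖ = ‖v‖ := by rw [norm_mul, norm_conj, hw, one_mul]
  rw [twistedFejerSum_eq]
  rcases le_or_gt ‖v‖ (1 / 4) with hsmall | hlarge
  · have hlt : ‖v‖ < 1 := by linarith
    have hgeom : ‖v‖ / (1 - ‖v‖) ≤ 4 / 3 * ‖v‖ := by
      rw [div_le_iff₀ (by linarith)]
      nlinarith [norm_nonneg v]
    have h₀ := abs_le.mp (abs_fejerSum_le hlt n)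
    have h₁ := abs_le.mp (abs_fejerSum_le (hwv ▸ hlt) n)
    have h₂ := abs_le.mp (abs_fejerSum_le (hwv' ▸ hlt) n)
    rw [hwv] at h₁
    rw [hwv'] at h₂
    linarith [h₀.1, h₁.1, h₂.1]
  · linarith [fejerSum_ge_neg_half hv n, fejerSum_ge_neg_half (hwv ▸ hv) n,
      fejerSum_ge_neg_half (hwv' ▸ hv) n]

lemma le_twistedFejerSum_self {w : ℂ} (hw : ‖w‖ = 1) (n : ℕ) :
    fejerSum n w + n / 4 - 1 / 4 ≤ twistedFejerSum n w w := by
  have hconj : conj w * w = 1 := by rw [mul_comm, mul_conj, normSq_eq_norm_sq, hw]; simp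
  have hone : fejerSum n 1 = n / 2 := by simp [fejerSum, sum_fejerWeight]
  have hww : ‖w * w‖ ≤ 1 := by rw [norm_mul, hw, one_mul]
  rw [twistedFejerSum_eq, hconj, hone]
  linarith [fejerSum_ge_neg_half hww n]

section PowerSums

variable {u : ℕ → ℂ}

lemma summable_pow_of_norm_le_one (hle : ∀ j, ‖u j‖ ≤ 1) (hs : Summable fun j => ‖u j‖)
    {k : ℕ} (hk : k ≠ 0) : Summable fun j => u j ^ k :=
  hs.of_norm_bounded fun j => by
    rw [norm_pow]; exact pow_le_of_le_one (norm_nonneg _) (hle j) hk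

lemma summable_re_pow_of_norm_le_one (hle : ∀ j, ‖u j‖ ≤ 1) (hs : Summable fun j => ‖u j‖)
    {k : ℕ} (hk : k ≠ 0) : Summable fun j => (u j ^ k).re :=
  reCLM.summable (summable_pow_of_norm_le_one hle hs hk)

lemma sum_mul_re_tsum_pow_eq_tsum_twistedFejerSum (hle : ∀ j, ‖u j‖ ≤ 1)
    (hs : Summable fun j => ‖u j‖) (n : ℕ) (w : ℂ) :
    ∑ i ∈ range n, fejerWeight n i * (1 + (w ^ (i + 1)).re) * (∑' j, u j ^ (i + 1)).re
      = ∑' j, twistedFejerSum n w (u j) := by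
  simp only [twistedFejerSum]
  rw [Summable.tsum_finsetSum fun i _ =>
    (summable_re_pow_of_norm_le_one hle hs i.succ_ne_zero).mul_left _]
  refine sum_congr rfl fun i _ => ?_
  rw [tsum_mul_left, re_tsum (summable_pow_of_norm_le_one hle hs i.succ_ne_zero)]

lemma le_tsum_twistedFejerSum (h0 : ‖u 0‖ = 1) (hle : ∀ j, ‖u j‖ ≤ 1)
    (hs : Summable fun j => ‖u j‖) (n : ℕ) :
    fejerSum n (u 0) + n / 4 + 15 / 4 - 4 * ∑' j, ‖u j‖
      ≤ ∑' j, twistedFejerSum n (u 0) (u j) := by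
  have hsum : Summable fun j => twistedFejerSum n (u 0) (u j) :=
    summable_sum fun i _ => (summable_re_pow_of_norm_le_one hle hs i.succ_ne_zero).mul_left _
  have hshift : twistedFejerSum n (u 0) (u 0) + 4 * ‖u 0‖
      ≤ ∑' j, (twistedFejerSum n (u 0) (u j) + 4 * ‖u j‖) :=
    (hsum.add (hs.mul_left 4)).le_tsum 0 fun j _ => by
      linarith [neg_four_mul_norm_le_twistedFejerSum h0 (hle j) n]
  rw [hsum.tsum_add (hs.mul_left 4), tsum_mul_left, h0] at hshift
  linarith [le_twistedFejerSum_self h0 n]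

theorem exists_one_eighth_le_re_tsum_pow (h0 : ‖u 0‖ = 1) (hle : ∀ j, ‖u j‖ ≤ 1)
    (hs : Summable fun j => ‖u j‖) {n : ℕ} (hn : 24 * ∑' j, ‖u j‖ < n + 1) :
    ∃ k, 1 ≤ k ∧ k ≤ n ∧ 1 / 8 ≤ (∑' j, u j ^ k).re := by
  by_contra! hsmall
  have hupper : ∑ i ∈ range n, fejerWeight n i * (1 + (u 0 ^ (i + 1)).re)
        * (∑' j, u j ^ (i + 1)).re ≤ (n / 2 + fejerSum n (u 0)) / 8 := by
    rw [← sum_fejerWeight_mul_one_add_re, sum_div]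
    refine sum_le_sum fun i hi => ?_
    have hweight : 0 ≤ fejerWeight n i * (1 + (u 0 ^ (i + 1)).re) := by
      have hre := abs_re_le_norm (u 0 ^ (i + 1))
      rw [norm_pow, h0, one_pow] at hre
      exact mul_nonneg (fejerWeight_nonneg hi) (by linarith [neg_abs_le (u 0 ^ (i + 1)).re])
    have := hsmall (i + 1) (Nat.le_add_left 1 i) (mem_range.mp hi)
    nlinarith
  rw [sum_mul_re_tsum_pow_eq_tsum_twistedFejerSum hle hs] at hupper
  linarith [le_tsum_twistedFejerSum h0 hle hs n, fejerSum_ge_neg_half h0.le n,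
    (tsum_nonneg fun j => norm_nonneg (u j) : 0 ≤ ∑' j, ‖u j‖)]

end PowerSums

end Turan

end

/-- **Turán's power sum theorem.**  If `(y j)_{j ≥ 0}` is a sequence of complex numbers with
nonincreasing absolute values, `y 0 ≠ 0`, and `K = Σ_j |y j| / |y 0|` converges, then there is
an integer `1 ≤ k ≤ 24 K` with `Re Σ_j (y j)^k ≥ (1/8) |y 0|^k`. -/
theorem statement7 (y : ℕ → ℂ) (hy₀ : y 0 ≠ 0)
    (hmono : ∀ j, ‖y (j + 1)‖ ≤ ‖y j‖)
    (hsum : Summable fun j => ‖y j‖)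
    (K : ℝ) (hK : K = ∑' j, ‖y j‖ / ‖y 0‖) :
    ∃ k : ℕ, 1 ≤ k ∧ (k : ℝ) ≤ 24 * K ∧
      (∑' j, (y j) ^ k).re ≥ (1 / 8) * ‖y 0‖ ^ k := by
  have hD : 0 < ‖y 0‖ := norm_pos_iff.mpr hy₀
  set u : ℕ → ℂ := fun j => y j / ‖y 0‖
  have hnorm (j : ℕ) : ‖u j‖ = ‖y j‖ / ‖y 0‖ := by simp [u]
  have hKu : K = ∑' j, ‖u j‖ := by simp only [hK, hnorm]
  have hK0 : 0 ≤ K := hKu ▸ tsum_nonneg fun j => norm_nonneg _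
  obtain ⟨k, hk1, hkn, hk⟩ := Turan.exists_one_eighth_le_re_tsum_pow (u := u)
    (by rw [hnorm, div_self hD.ne'])
    (fun j => by
      rw [hnorm, div_le_one hD]
      exact antitone_nat_of_succ_le (f := (‖y ·‖)) hmono j.zero_le)
    (by simpa only [hnorm] using hsum.div_const ‖y 0‖) (n := ⌊24 * K⌋₊)
    (by rw [← hKu]; exact Nat.lt_floor_add_one _)
  refine ⟨k, hk1, (Nat.cast_le.mpr hkn).trans (Nat.floor_le (by linarith)), ?_⟩
  have hscale : ∑' j, y j ^ k = ((‖y 0‖ ^ k : ℝ) : ℂ) * ∑' j, u j ^ k := by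
    rw [← tsum_mul_left]
    refine tsum_congr fun j => ?_
    rw [div_pow, ofReal_pow, mul_div_cancel₀ _ (pow_ne_zero _ (ofReal_ne_zero.mpr hD.ne'))]
  rw [hscale, re_ofReal_mul, ge_iff_le, mul_comm]
  exact mul_le_mul_of_nonneg_left hk (pow_nonneg hD.le k)
end

section
/- Let χ₁ mod q₁ and χ₂ mod q₂ be distinct primitive real Dirichlet characters, and let ψ be the primitive Dirichlet character inducing χ₁χ₂. Then for every prime p and every integer m ≥ 1, the quantity 1 + χ₁(p^m) + χ₂(p^m) + ψ(p^m) is a nonnegative real number. Consequently, all Dirichlet series coefficients a_D(n) of −D′/D(s) = Σ_{n≥1} a_D(n) n^{−s} are nonnegative, where D(s) = ζ(s)·L(s,χ₁)·L(s,χ₂)·L(s,ψ). -/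
open Complex DirichletCharacter

/-- A Dirichlet character is *real* if all of its values are real. -/
def DirichletCharacter.IsRealChar {q : ℕ} (χ : DirichletCharacter ℂ q) : Prop :=
  ∀ a : ZMod q, (χ a).im = 0


lemma conductor_aux {p q₁ q₂ qψ N : ℕ} [NeZero q₁] [NeZero q₂] [NeZero qψ]
    (χ₁ : DirichletCharacter ℂ q₁) (χ₂ : DirichletCharacter ℂ q₂)
    (ψ : DirichletCharacter ℂ qψ)
    (hprim₁ : χ₁.IsPrimitive)
    (h1N : q₁ ∣ N) (h2N : q₂ ∣ N) (hψN : qψ ∣ N) (hN : N ≠ 0)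
    (hp : p.Prime) (hpq₁ : p ∣ q₁) (hpq₂ : ¬ p ∣ q₂) (hpqψ : ¬ p ∣ qψ)
    (hk : N.factorization p = q₁.factorization p)
    (hval : ∀ b : ℕ, Nat.Coprime b N →
      ψ (b : ZMod qψ) = χ₁ (b : ZMod q₁) * χ₂ (b : ZMod q₂)) : False := by
  have hq₁0 : q₁ ≠ 0 := NeZero.ne q₁
  set P : ℕ := p ^ N.factorization p with hP
  set M : ℕ := ordCompl[p] N with hM
  have hPM : P * M = N := Nat.ordProj_mul_ordCompl_eq_self N p
  have hpM : ¬ p ∣ M := Nat.not_dvd_ordCompl hp hN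
  have hcopPM : Nat.Coprime P M :=
    Nat.Coprime.pow_left _ ((Nat.Prime.coprime_iff_not_dvd hp).mpr hpM)
  have hPq₁ : P ∣ q₁ := by
    rw [hP, hk]; exact Nat.ordProj_dvd q₁ p
  set q₁' : ℕ := ordCompl[p] q₁ with hq₁'
  have hq₁eq : P * q₁' = q₁ := by
    rw [hP, hk]; exact Nat.ordProj_mul_ordCompl_eq_self q₁ p
  have hpq₁' : ¬ p ∣ q₁' := Nat.not_dvd_ordCompl hp hq₁0
  have hcopPq₁' : Nat.Coprime P q₁' :=
    Nat.Coprime.pow_left _ ((Nat.Prime.coprime_iff_not_dvd hp).mpr hpq₁')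
  -- q₂ ∣ M, qψ ∣ M, q₁' ∣ M
  have hdvdM : ∀ t : ℕ, t ∣ N → ¬ p ∣ t → t ∣ M := by
    intro t htN hpt
    have hcop : Nat.Coprime t P :=
      Nat.Coprime.pow_right _ (Nat.coprime_comm.mp ((Nat.Prime.coprime_iff_not_dvd hp).mpr hpt))
    refine hcop.dvd_of_dvd_mul_left ?_
    rwa [hPM]
  have h2M : q₂ ∣ M := hdvdM q₂ h2N hpq₂
  have hψM : qψ ∣ M := hdvdM qψ hψN hpqψ
  have hq₁'q₁ : q₁' ∣ q₁ := ⟨P, by rw [← hq₁eq, mul_comm]⟩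
  have h1'M : q₁' ∣ M := hdvdM q₁' (dvd_trans hq₁'q₁ h1N) hpq₁'
  -- χ₁ factors through d := q₁ / p
  set d : ℕ := q₁ / p with hd
  have hddvd : d ∣ q₁ := Nat.div_dvd_of_dvd hpq₁
  have hq₁'d : q₁' ∣ d := by
    rw [hd, Nat.dvd_div_iff_mul_dvd hpq₁]
    refine dvd_trans (mul_dvd_mul_right ?_ q₁') (dvd_of_eq hq₁eq)
    show p ∣ p ^ N.factorization p
    rw [hk]
    exact dvd_pow_self p (Nat.Prime.factorization_pos_of_dvd hp hq₁0 hpq₁).ne'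
  have hft : FactorsThrough χ₁ d := by
    rw [factorsThrough_iff_ker_unitsMap hddvd]
    intro u hu
    have hu1 : ZMod.unitsMap hddvd u = 1 := hu
    set a : ℕ := (u : ZMod q₁).val with ha
    have hacast : (a : ZMod q₁) = ↑u := ZMod.natCast_rightInverse _
    have hacop : a.Coprime q₁ := ZMod.val_coe_unit_coprime u
    have had : a ≡ 1 [MOD d] := by
      have h1 : (ZMod.cast ((u : ZMod q₁)) : ZMod d) = 1 := by
        have h0 : (ZMod.cast ((u : ZMod q₁)) : ZMod d) = ((ZMod.unitsMap hddvd u : ZMod d)) := rfl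
        rw [h0, hu1, Units.val_one]
      have h2 : ((a : ZMod d)) = ((1 : ℕ) : ZMod d) := by
        rw [← ZMod.cast_natCast hddvd a, hacast, h1, Nat.cast_one]
      exact (ZMod.natCast_eq_natCast_iff _ _ _).mp h2
    have haq₁' : a ≡ 1 [MOD q₁'] := had.of_dvd hq₁'d
    obtain ⟨b, hb1, hb2⟩ := Nat.chineseRemainder hcopPM a 1
    have hbP : Nat.Coprime b P := by
      have : Nat.gcd b P = Nat.gcd a P := hb1.gcd_eq
      rw [Nat.Coprime, this]
      exact hacop.coprime_dvd_right hPq₁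
    have hbM : Nat.Coprime b M := by
      have : Nat.gcd b M = Nat.gcd 1 M := hb2.gcd_eq
      rw [Nat.Coprime, this, Nat.gcd_one_left]
    have hbN : Nat.Coprime b N := by rw [← hPM]; exact Nat.Coprime.mul_right hbP hbM
    -- congruences of b
    have hbq₁ : b ≡ a [MOD q₁] := by
      rw [← hq₁eq]
      exact (Nat.modEq_and_modEq_iff_modEq_mul hcopPq₁').mp
        ⟨hb1, (hb2.of_dvd h1'M).trans haq₁'.symm⟩
    have hbq₂ : b ≡ 1 [MOD q₂] := hb2.of_dvd h2M
    have hbqψ : b ≡ 1 [MOD qψ] := hb2.of_dvd hψM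
    have hev := hval b hbN
    rw [(ZMod.natCast_eq_natCast_iff _ _ _).mpr hbqψ,
        (ZMod.natCast_eq_natCast_iff _ _ _).mpr hbq₂,
        (ZMod.natCast_eq_natCast_iff _ _ _).mpr hbq₁, hacast] at hev
    push_cast at hev
    rw [map_one, map_one, mul_one] at hev
    -- hev : 1 = χ₁ ↑u
    have : χ₁.toUnitHom u = 1 := by
      apply Units.ext
      rw [MulChar.coe_toUnitHom, ← hev, Units.val_one]
    exact this
  have hle : χ₁.conductor ≤ d := Nat.sInf_le hft
  rw [hprim₁] at hle
  have hlt : d < q₁ := Nat.div_lt_self (Nat.pos_of_ne_zero hq₁0) hp.one_lt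
  omega

/-- values of a real Dirichlet character are 0, 1 or -1 -/
lemma realChar_vals {q : ℕ} [NeZero q] (χ : DirichletCharacter ℂ q)
    (hreal : ∀ a : ZMod q, (χ a).im = 0) (x : ZMod q) :
    χ x = 0 ∨ χ x = 1 ∨ χ x = -1 := by
  by_cases hx : IsUnit x
  · obtain ⟨u, rfl⟩ := hx
    have ht : q.totient ≠ 0 := (Nat.totient_pos.mpr (Nat.pos_of_ne_zero (NeZero.ne q))).ne'
    have hpow : (χ ↑u) ^ q.totient = 1 := by
      rw [← map_pow, ← Units.val_pow_eq_pow_val, ZMod.pow_totient, Units.val_one, map_one]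
    have him : (χ ↑u).im = 0 := hreal ↑u
    have hz : χ ↑u = ((χ ↑u).re : ℂ) := Complex.ext (by simp) (by simp [him])
    have hre : ((χ ↑u).re) ^ q.totient = 1 := by
      have := hpow
      rw [hz] at this
      exact_mod_cast this
    rcases (pow_eq_one_iff_of_ne_zero ht).mp hre with h | ⟨h, -⟩
    · right; left; rw [hz, h]; norm_num
    · right; right; rw [hz, h]; norm_num
  · left; exact MulChar.map_nonunit χ hx

theorem statement8 (q₁ q₂ : ℕ) [NeZero q₁] [NeZero q₂]
    (χ₁ : DirichletCharacter ℂ q₁) (χ₂ : DirichletCharacter ℂ q₂)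
    (hprim₁ : χ₁.IsPrimitive) (hprim₂ : χ₂.IsPrimitive)
    (hreal₁ : χ₁.IsRealChar) (hreal₂ : χ₂.IsRealChar)
    (hdist : ∃ n : ℕ, χ₁ (n : ZMod q₁) ≠ χ₂ (n : ZMod q₂))
    -- `ψ` is the primitive character inducing `χ₁χ₂ mod lcm(q₁,q₂)`
    (qψ : ℕ) [NeZero qψ] (ψ : DirichletCharacter ℂ qψ) (hψprim : ψ.IsPrimitive)
    (hψdvd : qψ ∣ Nat.lcm q₁ q₂)
    (hψind : changeLevel hψdvd ψ =
      changeLevel (Nat.dvd_lcm_left q₁ q₂) χ₁ * changeLevel (Nat.dvd_lcm_right q₁ q₂) χ₂) :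
    -- `1 + χ₁(p^m) + χ₂(p^m) + ψ(p^m)` is a nonnegative real number
    (∀ p m : ℕ, p.Prime → 1 ≤ m →
      ∃ r : ℝ, 0 ≤ r ∧
        1 + χ₁ ((p : ZMod q₁) ^ m) + χ₂ ((p : ZMod q₂) ^ m) + ψ ((p : ZMod qψ) ^ m) = (r : ℂ)) ∧
    -- consequently, all Dirichlet series coefficients `a_D(n)` of `−D′/D` are nonnegative
    (∀ aD : ℕ → ℂ,
      (∀ p m : ℕ, p.Prime → 1 ≤ m →
        aD (p ^ m) = (1 + χ₁ ((p : ZMod q₁) ^ m) + χ₂ ((p : ZMod q₂) ^ m) +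
          ψ ((p : ZMod qψ) ^ m)) * (Real.log p : ℂ)) →
      (∀ n : ℕ, ¬ IsPrimePow n → aD n = 0) →
      ∀ n : ℕ, 0 ≤ (aD n).re ∧ (aD n).im = 0) := by
  set N := Nat.lcm q₁ q₂ with hNdef
  have hN : N ≠ 0 := Nat.lcm_ne_zero (NeZero.ne q₁) (NeZero.ne q₂)
  have : NeZero N := ⟨hN⟩
  -- evaluation of the inducing relation at naturals coprime to N
  have hval : ∀ b : ℕ, Nat.Coprime b N →
      ψ (b : ZMod qψ) = χ₁ (b : ZMod q₁) * χ₂ (b : ZMod q₂) := by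
    intro b hb
    have h := DFunLike.congr_fun hψind ((b : ZMod N))
    rw [MulChar.mul_apply] at h
    have hw : ((ZMod.unitOfCoprime b hb : (ZMod N)ˣ) : ZMod N) = (b : ZMod N) :=
      ZMod.coe_unitOfCoprime b hb
    rw [← hw, changeLevel_eq_cast_of_dvd, changeLevel_eq_cast_of_dvd,
      changeLevel_eq_cast_of_dvd, hw, ZMod.cast_natCast hψdvd,
      ZMod.cast_natCast (Nat.dvd_lcm_left q₁ q₂),
      ZMod.cast_natCast (Nat.dvd_lcm_right q₁ q₂)] at h
    exact h
  -- realness of ψ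
  have hrealψ : ∀ a : ZMod qψ, (ψ a).im = 0 := by
    intro a
    by_cases ha : IsUnit a
    · obtain ⟨u, rfl⟩ := ha
      obtain ⟨v, hv⟩ := ZMod.unitsMap_surjective hψdvd u
      have hb : Nat.Coprime ((v : ZMod N)).val N := ZMod.val_coe_unit_coprime v
      have h1 : ((((v : ZMod N)).val : ℕ) : ZMod N) = (v : ZMod N) :=
        ZMod.natCast_rightInverse _
      have h2 : ((((v : ZMod N)).val : ℕ) : ZMod qψ) = ((u : ZMod qψ)) := by
        rw [← ZMod.cast_natCast hψdvd, h1, ← hv]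
        rfl
      have h3 : ((((v : ZMod N)).val : ℕ) : ZMod q₁) = ZMod.cast ((v : ZMod N)) := by
        rw [← ZMod.cast_natCast (Nat.dvd_lcm_left q₁ q₂), h1]
      have h4 : ((((v : ZMod N)).val : ℕ) : ZMod q₂) = ZMod.cast ((v : ZMod N)) := by
        rw [← ZMod.cast_natCast (Nat.dvd_lcm_right q₁ q₂), h1]
      have := hval _ hb
      rw [h2, h3, h4] at this
      rw [this, Complex.mul_im, hreal₁ _, hreal₂ _]
      simp
    · rw [MulChar.map_nonunit ψ ha]
      simp
  have part1 : ∀ p m : ℕ, p.Prime → 1 ≤ m →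
      ∃ r : ℝ, 0 ≤ r ∧
        1 + χ₁ ((p : ZMod q₁) ^ m) + χ₂ ((p : ZMod q₂) ^ m) + ψ ((p : ZMod qψ) ^ m) = (r : ℂ) := by
    intro p m hp hm
    have hm0 : m ≠ 0 := by omega
    -- nonunit power criterion
    have hnonunit : ∀ q : ℕ, p ∣ q → ¬ IsUnit ((p : ZMod q) ^ m) := by
      intro q hq hu
      have : IsUnit ((p : ZMod q)) := isUnit_of_dvd_unit (dvd_pow_self _ hm0) hu
      rw [ZMod.isUnit_iff_coprime] at this
      exact hp.one_lt.ne' (Nat.Coprime.eq_one_of_dvd this hq)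
    by_cases h1 : p ∣ q₁ <;> by_cases h2 : p ∣ q₂
    · -- p ∣ q₁ and p ∣ q₂ : first two terms vanish
      rw [MulChar.map_nonunit χ₁ (hnonunit q₁ h1), MulChar.map_nonunit χ₂ (hnonunit q₂ h2)]
      rcases realChar_vals ψ hrealψ ((p : ZMod qψ) ^ m) with hc | hc | hc <;>
        rw [hc] <;> [exact ⟨1, by norm_num⟩; exact ⟨2, by norm_num⟩; exact ⟨0, by norm_num⟩]
    · -- p ∣ q₁ only : p ∣ qψ, so first and last terms vanish
      have hpψ : p ∣ qψ := by
        by_contra hpψ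
        have hk : N.factorization p = q₁.factorization p := by
          rw [hNdef, Nat.factorization_lcm (NeZero.ne q₁) (NeZero.ne q₂), Finsupp.sup_apply,
            Nat.factorization_eq_zero_of_not_dvd h2]
          simp
        exact conductor_aux χ₁ χ₂ ψ hprim₁ (Nat.dvd_lcm_left q₁ q₂) (Nat.dvd_lcm_right q₁ q₂)
          hψdvd hN hp h1 h2 hpψ hk hval
      rw [MulChar.map_nonunit χ₁ (hnonunit q₁ h1), MulChar.map_nonunit ψ (hnonunit qψ hpψ)]
      rcases realChar_vals χ₂ hreal₂ ((p : ZMod q₂) ^ m) with hc | hc | hc <;>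
        rw [hc] <;> [exact ⟨1, by norm_num⟩; exact ⟨2, by norm_num⟩; exact ⟨0, by norm_num⟩]
    · -- p ∣ q₂ only : symmetric
      have hpψ : p ∣ qψ := by
        by_contra hpψ
        have hk : N.factorization p = q₂.factorization p := by
          rw [hNdef, Nat.factorization_lcm (NeZero.ne q₁) (NeZero.ne q₂), Finsupp.sup_apply,
            Nat.factorization_eq_zero_of_not_dvd h1]
          simp
        refine conductor_aux χ₂ χ₁ ψ hprim₂ (Nat.dvd_lcm_right q₁ q₂) (Nat.dvd_lcm_left q₁ q₂)
          hψdvd hN hp h2 h1 hpψ hk ?_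
        intro b hb
        rw [hval b hb, mul_comm]
      rw [MulChar.map_nonunit χ₂ (hnonunit q₂ h2), MulChar.map_nonunit ψ (hnonunit qψ hpψ)]
      rcases realChar_vals χ₁ hreal₁ ((p : ZMod q₁) ^ m) with hc | hc | hc <;>
        rw [hc] <;> [exact ⟨1, by norm_num⟩; exact ⟨2, by norm_num⟩; exact ⟨0, by norm_num⟩]
    · -- p coprime to both
      have hpN : ¬ p ∣ N := by
        intro hpN
        rcases (Nat.Prime.dvd_mul hp).mp (hpN.trans (Nat.lcm_dvd_mul q₁ q₂)) with h | h
        exacts [h1 h, h2 h]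
      have hcop : Nat.Coprime (p ^ m) N :=
        Nat.Coprime.pow_left _ ((Nat.Prime.coprime_iff_not_dvd hp).mpr hpN)
      have hc := hval (p ^ m) hcop
      push_cast at hc
      have hu1 : IsUnit ((p : ZMod q₁) ^ m) := by
        have : IsUnit (((p ^ m : ℕ) : ZMod q₁)) := (ZMod.isUnit_iff_coprime _ _).mpr
          (Nat.Coprime.pow_left _ ((Nat.Prime.coprime_iff_not_dvd hp).mpr
            (fun h => h1 h)))
        push_cast at this
        exact this
      have hu2 : IsUnit ((p : ZMod q₂) ^ m) := by
        have : IsUnit (((p ^ m : ℕ) : ZMod q₂)) := (ZMod.isUnit_iff_coprime _ _).mpr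
          (Nat.Coprime.pow_left _ ((Nat.Prime.coprime_iff_not_dvd hp).mpr
            (fun h => h2 h)))
        push_cast at this
        exact this
      have hne1 : χ₁ ((p : ZMod q₁) ^ m) ≠ 0 := by
        obtain ⟨v, hv⟩ := hu1
        rw [← hv, ← MulChar.coe_toUnitHom]
        exact Units.ne_zero _
      have hne2 : χ₂ ((p : ZMod q₂) ^ m) ≠ 0 := by
        obtain ⟨v, hv⟩ := hu2
        rw [← hv, ← MulChar.coe_toUnitHom]
        exact Units.ne_zero _
      rcases realChar_vals χ₁ hreal₁ ((p : ZMod q₁) ^ m) with ha | ha | ha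
      · exact absurd ha hne1
      all_goals rcases realChar_vals χ₂ hreal₂ ((p : ZMod q₂) ^ m) with hb | hb | hb
      · exact absurd hb hne2
      · exact ⟨4, by norm_num, by rw [hc, ha, hb]; norm_num⟩
      · exact ⟨0, by norm_num, by rw [hc, ha, hb]; norm_num⟩
      · exact absurd hb hne2
      · exact ⟨0, by norm_num, by rw [hc, ha, hb]; norm_num⟩
      · exact ⟨0, by norm_num, by rw [hc, ha, hb]; norm_num⟩
  refine ⟨part1, ?_⟩
  intro aD hpp hnpp n
  by_cases hn : IsPrimePow n
  · obtain ⟨p, k, hp, hk, rfl⟩ := hn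
    have hp' : p.Prime := Nat.prime_iff.mpr hp
    obtain ⟨r, hr0, hr⟩ := part1 p k hp' hk
    rw [hpp p k hp' hk, hr, ← Complex.ofReal_mul]
    have hlog : 0 ≤ Real.log p := Real.log_nonneg (by exact_mod_cast hp'.one_lt.le)
    constructor
    · rw [Complex.ofReal_re]
      exact mul_nonneg hr0 hlog
    · exact Complex.ofReal_im _
  · rw [hnpp n hn]
    simp
end
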